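/- If unit vectors {x_k}_{k∈[n]} in ℍ^d form a projective 2-design, i.e. (1/n²) Σ_{k,ℓ} ⟨x_k x_k^*, x_ℓ x_ℓ^*⟩² = 2·3/(2d(2d+1)) = 3/(d(2d+1)), then the 3-dimensional subspaces {S(x_k)}_{k∈[n]} form a tight fusion frame in the d(2d+1)-dimensional real vector space of d×d quaternionic anti-Hermitian matrices: (1/n²) Σ_{k,ℓ} ‖G_{x_k x_ℓ}‖_F² = 9/(d(2d+1)). -/

import Mathlib

open Matrix BigOperators

/-- The quaternion units `i, j, k`. -/
def qunit : Fin 3 → Quaternion ℝ := ![⟨0,1,0,0⟩, ⟨0,0,1,0⟩, ⟨0,0,0,1⟩]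

/-- The matrix `x z x^*` for `x ∈ ℍ^d`, `z ∈ ℍ`. -/
noncomputable def xzxStar {d : ℕ} (x : Fin d → Quaternion ℝ) (z : Quaternion ℝ) :
    Matrix (Fin d) (Fin d) (Quaternion ℝ) :=
  fun i j => x i * z * star (x j)

/-- The real inner product `⟨A,B⟩ = Re tr(A^*B)` on `ℍ^{d×d}`. -/
noncomputable def qmInner {d : ℕ} (A B : Matrix (Fin d) (Fin d) (Quaternion ℝ)) : ℝ :=
  (Matrix.trace (Aᴴ * B)).re

/-- The quaternionic inner product `x^*y = ∑ᵢ x̄ᵢ yᵢ`. -/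
noncomputable def qvInner {d : ℕ} (x y : Fin d → Quaternion ℝ) : Quaternion ℝ :=
  ∑ i, star (x i) * y i

/-- The rank-one matrix `x x^*`. -/
noncomputable def qRankOne {d : ℕ} (x : Fin d → Quaternion ℝ) :
    Matrix (Fin d) (Fin d) (Quaternion ℝ) :=
  fun i j => x i * star (x j)

/-- The `3×3` cross-Gramian of `S(x)` and `S(y)`. -/
noncomputable def crossGram {d : ℕ} (x y : Fin d → Quaternion ℝ) : Matrix (Fin 3) (Fin 3) ℝ :=
  fun a b => qmInner (xzxStar x (qunit a)) (xzxStar y (qunit b))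

/-! With `q = x^*y`, the trace `Re tr((x u x^*)^* (y v y^*))` collapses to `Re (q̄ ū q v)`. The
map `z ↦ q̄ z q` is `|q|²` times a rotation of the imaginary quaternions, so the cross-Gramian
`G_{xy}` is `|q|²` times an orthogonal `3×3` matrix and `‖G_{xy}‖_F² = 3|q|⁴ = 3⟨xx^*, yy^*⟩²`.
Averaging over all pairs multiplies the design identity by `3`. -/

namespace Quaternion

variable {R : Type*} [CommRing R]

theorem re_mul_comm (a b : ℍ[R]) : (a * b).re = (b * a).re := by
  simp only [re_mul]; ring

theorem re_sum {ι : Type*} (s : Finset ι) (f : ι → ℍ[R]) :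
    (∑ i ∈ s, f i).re = ∑ i ∈ s, (f i).re :=
  map_sum (QuaternionAlgebra.reₗ _ _ _) f s

end Quaternion

open Quaternion

theorem star_qvInner {d : ℕ} (x y : Fin d → ℍ[ℝ]) : star (qvInner x y) = qvInner y x := by
  simp [qvInner, star_sum]

theorem qmInner_xzxStar {d : ℕ} (x y : Fin d → ℍ[ℝ]) (u v : ℍ[ℝ]) :
    qmInner (xzxStar x u) (xzxStar y v)
      = (star (qvInner x y) * star u * qvInner x y * v).re := by
  calc qmInner (xzxStar x u) (xzxStar y v)
      = ∑ i, (x i * (star u * (qvInner x y * v)) * star (y i)).re := by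
        simp only [qmInner, trace, diag_apply, mul_apply, conjTranspose_apply, xzxStar, re_sum,
          qvInner, Finset.mul_sum, Finset.sum_mul, star_mul, star_star, mul_assoc]
    _ = ∑ i, (star (y i) * x i * (star u * (qvInner x y * v))).re := by
        refine Finset.sum_congr rfl fun i _ => ?_
        rw [re_mul_comm, mul_assoc]
    _ = (star (qvInner x y) * star u * qvInner x y * v).re := by
        rw [← re_sum, ← Finset.sum_mul, star_qvInner]
        simp only [qvInner, mul_assoc]

theorem qRankOne_eq_xzxStar_one {d : ℕ} (x : Fin d → ℍ[ℝ]) : qRankOne x = xzxStar x 1 := by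
  ext i j : 1; simp [qRankOne, xzxStar]

theorem qmInner_qRankOne {d : ℕ} (x y : Fin d → ℍ[ℝ]) :
    qmInner (qRankOne x) (qRankOne y) = normSq (qvInner x y) := by
  rw [qRankOne_eq_xzxStar_one, qRankOne_eq_xzxStar_one, qmInner_xzxStar]
  simp [star_mul_self]

theorem sum_sq_re_star_mul_star_qunit_mul_mul_qunit (q : ℍ[ℝ]) :
    ∑ a, ∑ b, ((star q * star (qunit a) * q * qunit b).re) ^ 2 = 3 * normSq q ^ 2 := by
  simp only [Fin.sum_univ_three, qunit, Fin.isValue, cons_val, normSq_def', re_mul, imI_mul,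
    imJ_mul, imK_mul, re_star, imI_star, imJ_star, imK_star]
  ring

theorem sum_sq_crossGram {d : ℕ} (x y : Fin d → ℍ[ℝ]) :
    ∑ a, ∑ b, crossGram x y a b ^ 2 = 3 * qmInner (qRankOne x) (qRankOne y) ^ 2 := by
  simp only [crossGram, qmInner_xzxStar, qmInner_qRankOne]
  exact sum_sq_re_star_mul_star_qunit_mul_mul_qunit _

theorem design_gives_tight_fusion_frame_general (d n : ℕ)
    (xs : Fin n → Fin d → Quaternion ℝ)
    (hdesign : (1 / (n : ℝ) ^ 2) *
        ∑ k, ∑ ℓ, (qmInner (qRankOne (xs k)) (qRankOne (xs ℓ))) ^ 2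
      = 3 / ((d : ℝ) * (2 * d + 1))) :
    (1 / (n : ℝ) ^ 2) *
        ∑ k, ∑ ℓ, ∑ a : Fin 3, ∑ b : Fin 3, (crossGram (xs k) (xs ℓ) a b) ^ 2
      = 9 / ((d : ℝ) * (2 * d + 1)) := by
  simp only [sum_sq_crossGram, ← Finset.mul_sum]
  linear_combination 3 * hdesign

/-- Theorem 4.4(b): if unit vectors `{xₖ}` in `ℍ^d` form a projective 2-design,
i.e. `(1/n²) ∑_{k,ℓ} ⟨xₖxₖ^*, x_ℓx_ℓ^*⟩² = 3/(d(2d+1))`, then the subspaces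
`S(xₖ)` form a tight fusion frame in the `d(2d+1)`-dimensional space of
quaternionic anti-Hermitian matrices:
`(1/n²) ∑_{k,ℓ} ‖G_{xₖx_ℓ}‖_F² = 9/(d(2d+1))`. -/
theorem design_gives_tight_fusion_frame (d n : ℕ)
    (xs : Fin n → Fin d → Quaternion ℝ)
    (hunit : ∀ k, qvInner (xs k) (xs k) = 1)
    (hdesign : (1 / (n : ℝ) ^ 2) *
        ∑ k, ∑ ℓ, (qmInner (qRankOne (xs k)) (qRankOne (xs ℓ))) ^ 2
      = 3 / ((d : ℝ) * (2 * d + 1))) :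
    (1 / (n : ℝ) ^ 2) *
        ∑ k, ∑ ℓ, ∑ a : Fin 3, ∑ b : Fin 3, (crossGram (xs k) (xs ℓ) a b) ^ 2
      = 9 / ((d : ℝ) * (2 * d + 1)) :=
  design_gives_tight_fusion_frame_general d n xs hdesign
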